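/- Let G be a countable group acting minimally on a compact Hausdorff space X. Then for every x ∈ X, there exists an element H of the stabilizer URS S_G(X) with H ≤ G_x; and for every H ∈ S_G(X), there exists x ∈ X with G_x⁰ ≤ H. -/

import Mathlib

/-- The Chabauty topology on the space of subgroups of `G`. -/
noncomputable instance chabautyTopology {G : Type*} [Group G] :
    TopologicalSpace (Subgroup G) :=
  TopologicalSpace.induced
    (fun H : Subgroup G => fun g : G => @decide (g ∈ H) (Classical.propDecidable _))
    inferInstance

/-- The germ stabilizer `G_x⁰`: elements acting trivially on a neighbourhood of `x`. -/
def germStabilizer (G : Type*) {X : Type*} [Group G] [TopologicalSpace X] [MulAction G X]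
    (x : X) : Subgroup G where
  carrier := {g : G | ∀ᶠ y in nhds x, g • y = y}
  one_mem' := Filter.Eventually.of_forall fun y => one_smul G y
  mul_mem' := by
    intro a b ha hb
    filter_upwards [ha, hb] with y hay hby
    rw [mul_smul, hby, hay]
  inv_mem' := by
    intro a ha
    filter_upwards [ha] with y hay
    nth_rewrite 1 [← hay]
    rw [inv_smul_smul]

/-!
The stabilizer map `x ↦ G_x` takes values in the compact space `Sub(G)`, and its graph has the
two semicontinuity properties `G_x⁰ ≤ H ≤ G_x` for every `(x, H)` in its closure. The set `X₀`
of continuity points is dense by Baire: it contains every point lying on none of the countably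
many nowhere dense frontiers of the closed fixed-point sets. Since both `X` and `Sub(G)` are
compact, the closure of the graph over `X₀` projects onto the closure of `X₀`, which is `X`, and
onto `S_G(X)`.
-/

open Filter Topology Set MulAction

namespace Subgroup

variable {G : Type*} [Group G]

lemma isInducing_decide_mem :
    IsInducing fun (H : Subgroup G) (g : G) => @decide (g ∈ H) (Classical.propDecidable _) :=
  ⟨rfl⟩

lemma tendsto_nhds_iff {α : Type*} {l : Filter α} {u : α → Subgroup G} {H : Subgroup G} :
    Tendsto u l (𝓝 H) ↔ ∀ g : G, ∀ᶠ a in l, g ∈ u a ↔ g ∈ H := by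
  simp only [isInducing_decide_mem.tendsto_nhds_iff, tendsto_pi_nhds, nhds_discrete,
    tendsto_pure, Function.comp_apply, decide_eq_decide]

lemma isClopen_setOf_mem (g : G) : IsClopen {K : Subgroup G | g ∈ K} := by
  have hcont : Continuous fun K : Subgroup G => @decide (g ∈ K) (Classical.propDecidable _) :=
    (continuous_apply g).comp isInducing_decide_mem.continuous
  convert (isClopen_discrete {true}).preimage hcont
  ext K
  simp

/-- The limit of an ultrafilter `𝒱` is the subgroup of those `g` with `g ∈ K` for `𝒱`-most `K`. -/
instance : CompactSpace (Subgroup G) where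
  isCompact_univ := isCompact_iff_ultrafilter_le_nhds.mpr fun 𝒱 _ => by
    let H : Subgroup G :=
      { carrier := {g | ∀ᶠ K in (𝒱 : Filter (Subgroup G)), g ∈ K}
        one_mem' := Eventually.of_forall fun K => K.one_mem
        mul_mem' := fun ha hb => ha.mp (hb.mono fun _ hb ha => mul_mem ha hb)
        inv_mem' := fun ha => ha.mono fun _ => inv_mem }
    refine ⟨H, mem_univ H, tendsto_nhds_iff.mpr fun g => ?_⟩
    by_cases hg : g ∈ H
    · exact hg.mono fun K hK => iff_of_true hK hg
    · exact (Ultrafilter.eventually_not.mpr hg).mono fun K hK => iff_of_false hK hg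

end Subgroup

lemma eventually_mem_iff_of_notMem_frontier {X : Type*} [TopologicalSpace X] {s : Set X} {y : X}
    (hy : y ∉ frontier s) : ∀ᶠ z in 𝓝 y, z ∈ s ↔ y ∈ s := by
  rw [← mem_compl_iff, compl_frontier_eq_union_interior] at hy
  rcases hy with hy | hy
  · filter_upwards [mem_interior_iff_mem_nhds.mp hy] with z hz
    exact iff_of_true hz (interior_subset hy)
  · filter_upwards [mem_interior_iff_mem_nhds.mp hy] with z hz
    exact iff_of_false hz (interior_subset hy)

section Stabilizer

variable {G X : Type*} [Group G] [TopologicalSpace X] [MulAction G X]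

lemma germStabilizer_le_stabilizer (x : X) : germStabilizer G x ≤ stabilizer G x :=
  fun _ hg => hg.self_of_nhds

lemma continuousAt_stabilizer_of_notMem_frontier {y : X}
    (hy : ∀ g : G, y ∉ frontier (fixedBy X g)) : ContinuousAt (stabilizer G) y :=
  Subgroup.tendsto_nhds_iff.mpr fun g => eventually_mem_iff_of_notMem_frontier (hy g)

lemma isClosed_fixedBy [T2Space X] [ContinuousConstSMul G X] (g : G) : IsClosed (fixedBy X g) :=
  isClosed_eq (continuous_const_smul g) continuous_id

lemma dense_setOf_continuousAt_stabilizer [Countable G] [BaireSpace X] [T2Space X]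
    [ContinuousConstSMul G X] : Dense {y : X | ContinuousAt (stabilizer G) y} := by
  refine Dense.mono (fun y hy => continuousAt_stabilizer_of_notMem_frontier (mem_iInter.mp hy)) ?_
  exact dense_iInter_of_isOpen (fun g => isClosed_frontier.isOpen_compl)
    fun g => interior_eq_empty_iff_dense_compl.mp (interior_frontier (isClosed_fixedBy g))

lemma isClosed_setOf_le_stabilizer [T2Space X] [ContinuousConstSMul G X] :
    IsClosed {p : X × Subgroup G | p.2 ≤ stabilizer G p.1} := by
  simp only [SetLike.le_def, ofPred_forall]
  exact isClosed_iInter fun g => isClosed_imp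
    ((Subgroup.isClopen_setOf_mem g).isOpen.preimage continuous_snd)
    ((isClosed_fixedBy g).preimage continuous_fst)

lemma isClosed_setOf_germStabilizer_le :
    IsClosed {p : X × Subgroup G | germStabilizer G p.1 ≤ p.2} := by
  simp only [SetLike.le_def, ofPred_forall]
  exact isClosed_iInter fun g => isClosed_imp
    ((isOpen_setOfPred_eventually_nhds (p := fun y : X => g • y = y)).preimage continuous_fst)
    ((Subgroup.isClopen_setOf_mem g).isClosed.preimage continuous_snd)

lemma closure_graph_stabilizer_subset [T2Space X] [ContinuousConstSMul G X] (s : Set X) :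
    closure ((fun y => (y, stabilizer G y)) '' s) ⊆
      {p : X × Subgroup G | germStabilizer G p.1 ≤ p.2 ∧ p.2 ≤ stabilizer G p.1} :=
  closure_minimal (image_subset_iff.mpr fun y _ => ⟨germStabilizer_le_stabilizer y, le_rfl⟩)
    (isClosed_setOf_germStabilizer_le.inter isClosed_setOf_le_stabilizer)

end Stabilizer

theorem stabilizer_urs_upper_semicontinuous_general {G X : Type*} [Group G] [Countable G]
    [TopologicalSpace X] [CompactSpace X] [T2Space X] [MulAction G X]
    (hcont : ∀ g : G, Continuous fun x : X => g • x) :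
    (∀ x : X, ∃ H ∈ closure ((fun y : X => MulAction.stabilizer G y) ''
        {y : X | ContinuousAt (fun z : X => MulAction.stabilizer G z) y}),
        H ≤ MulAction.stabilizer G x) ∧
    (∀ H ∈ closure ((fun y : X => MulAction.stabilizer G y) ''
        {y : X | ContinuousAt (fun z : X => MulAction.stabilizer G z) y}),
        ∃ x : X, germStabilizer G x ≤ H) := by
  have : ContinuousConstSMul G X := ⟨hcont⟩
  set X₀ := {y : X | ContinuousAt (stabilizer G) y}
  set Γ := (fun y => (y, stabilizer G y)) '' X₀
  have hfst : Prod.fst '' Γ = X₀ := by simp [Γ, image_image]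
  have hsnd : Prod.snd '' Γ = stabilizer G '' X₀ := by simp [Γ, image_image]
  have hΓ := closure_graph_stabilizer_subset (G := G) X₀
  constructor
  · intro x
    have hx : x ∈ Prod.fst '' closure Γ := by
      rw [← isClosedMap_fst_of_compactSpace.closure_image_eq_of_continuous continuous_fst, hfst,
        dense_setOf_continuousAt_stabilizer.closure_eq]
      exact mem_univ x
    obtain ⟨⟨x, H⟩, hxH, rfl⟩ := hx
    refine ⟨H, ?_, (hΓ hxH).2⟩
    rw [← hsnd]
    exact image_closure_subset_closure_image continuous_snd ⟨_, hxH, rfl⟩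
  · intro H hH
    rw [← hsnd, isClosedMap_snd_of_compactSpace.closure_image_eq_of_continuous continuous_snd]
      at hH
    obtain ⟨⟨x, H⟩, hxH, rfl⟩ := hH
    exact ⟨x, (hΓ hxH).1⟩

/-- For a minimal action of a countable group on a compact Hausdorff space, with
`S_G(X)` the closure of the stabilizers of continuity points of the stabilizer map:
every `x ∈ X` admits some `H ∈ S_G(X)` with `H ≤ G_x`, and every `H ∈ S_G(X)` admits
some `x ∈ X` with `G_x⁰ ≤ H`. -/
theorem stabilizer_urs_upper_semicontinuous {G X : Type*} [Group G] [Countable G]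
    [TopologicalSpace X] [CompactSpace X] [T2Space X] [Nonempty X] [MulAction G X]
    (hcont : ∀ g : G, Continuous fun x : X => g • x)
    (hmin : ∀ x : X, Dense (MulAction.orbit G x)) :
    (∀ x : X, ∃ H ∈ closure ((fun y : X => MulAction.stabilizer G y) ''
        {y : X | ContinuousAt (fun z : X => MulAction.stabilizer G z) y}),
        H ≤ MulAction.stabilizer G x) ∧
    (∀ H ∈ closure ((fun y : X => MulAction.stabilizer G y) ''
        {y : X | ContinuousAt (fun z : X => MulAction.stabilizer G z) y}),
        ∃ x : X, germStabilizer G x ≤ H) :=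
  stabilizer_urs_upper_semicontinuous_general hcont
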